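/- Suppose 0 < ε ≤ 1/6, β = ε, and n, m are nonnegative reals with the following: the algorithm's instantaneous cost is 2n, the potential increases by at most n/ε from OPT's processing, and decreases by at least ((1+6ε)(1-β)/ε)·n − ((1+6ε)(1-β)/(εβ))·m from the algorithm's processing. Then 2n + n/ε − ((1+6ε)(1-β)/ε)·n + ((1+6ε)(1-β)/(εβ))·m ≤ (2/ε²)·m. -/

import Mathlib

/-! With `β = ε` the coefficient of `n` collapses to `6ε - 3 ≤ 0`, since the `1/ε` terms cancel,
and the coefficient of `m` is `(1 + 6ε)(1 - ε)/ε² ≤ 2/ε²` because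
`2 - (1 + 6ε)(1 - ε) = (1 - 2ε)(1 - 3ε) ≥ 0` for `ε ≤ 1/3`. -/

lemma one_add_six_mul_mul_one_sub_le_two {ε : ℝ} (hε : ε ≤ 1 / 3) :
    (1 + 6 * ε) * (1 - ε) ≤ 2 := by
  nlinarith [mul_nonneg (by linarith : (0 : ℝ) ≤ 1 - 2 * ε) (by linarith : (0 : ℝ) ≤ 1 - 3 * ε)]

lemma running_condition_eq {ε : ℝ} (hε : ε ≠ 0) (n m : ℝ) :
    2 * n + n / ε - ((1 + 6 * ε) * (1 - ε) / ε) * n + ((1 + 6 * ε) * (1 - ε) / (ε * ε)) * m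
      = (6 * ε - 3) * n + ((1 + 6 * ε) * (1 - ε) / ε ^ 2) * m := by
  field_simp
  ring

/-- Arithmetic core of the running condition (Lemma 3): for `0 < ε ≤ 1/6`,
`β = ε`, and nonnegative `n`, `m`,
`2n + n/ε − ((1+6ε)(1−β)/ε)·n + ((1+6ε)(1−β)/(εβ))·m ≤ (2/ε²)·m`. -/
theorem stmt_8 (ε β n m : ℝ) (hε0 : 0 < ε) (hε1 : ε ≤ 1 / 6)
    (hβ : β = ε) (hn : 0 ≤ n) (hm : 0 ≤ m) :
    2 * n + n / ε - ((1 + 6 * ε) * (1 - β) / ε) * n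
      + ((1 + 6 * ε) * (1 - β) / (ε * β)) * m ≤ (2 / ε ^ 2) * m := by
  rw [hβ]
  rw [running_condition_eq hε0.ne']
  have hn_term : (6 * ε - 3) * n ≤ 0 := mul_nonpos_of_nonpos_of_nonneg (by linarith) hn
  have hm_term : ((1 + 6 * ε) * (1 - ε) / ε ^ 2) * m ≤ (2 / ε ^ 2) * m := by
    gcongr
    exact one_add_six_mul_mul_one_sub_le_two (by linarith)
  linarith
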